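/- There exists a simple graph on 16 vertices that does not contain the book B_6 as a (not necessarily induced) subgraph and whose complement does not contain the book B_3 as a (not necessarily induced) subgraph. -/

import Mathlib

open SimpleGraph

/-- `ContainsCopy G H` means the graph `H` contains a copy of `G` as a
(not necessarily induced) subgraph. -/
def ContainsCopy {α β : Type*} (G : SimpleGraph α) (H : SimpleGraph β) : Prop :=
  ∃ f : α → β, Function.Injective f ∧ ∀ ⦃u v : α⦄, G.Adj u v → H.Adj (f u) (f v)

/-- The join `G + H` of two graphs: take disjoint copies of `G` and `H` and add
all edges between them. -/
def graphJoin {α β : Type*} (G : SimpleGraph α) (H : SimpleGraph β) :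
    SimpleGraph (α ⊕ β) where
  Adj u v :=
    match u, v with
    | .inl a, .inl b => G.Adj a b
    | .inr a, .inr b => H.Adj a b
    | .inl _, .inr _ => True
    | .inr _, .inl _ => True
  symm := by
    constructor
    intro u v h
    cases u <;> cases v <;> simp_all <;> exact h.symm
  loopless := by
    constructor
    intro u
    cases u <;> simp

/-- The wheel `W n`: the join of a single vertex with a cycle on `n - 1` vertices. -/
def wheelGraph (n : ℕ) : SimpleGraph (Fin 1 ⊕ Fin (n - 1)) :=
  graphJoin (⊥ : SimpleGraph (Fin 1)) (cycleGraph (n - 1))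

/-- The book `B n`: the join of an edge `K₂` with an empty graph on `n` vertices. -/
def bookGraph (n : ℕ) : SimpleGraph (Fin 2 ⊕ Fin n) :=
  graphJoin (⊤ : SimpleGraph (Fin 2)) (⊥ : SimpleGraph (Fin n))

/-- The two-colour graph Ramsey number `R(G₁, G₂)`: the least `n` such that every
simple graph `G` on `n` vertices contains a copy of `G₁`, or its complement
contains a copy of `G₂`. -/
noncomputable def ramseyNumber {α β : Type*} (G₁ : SimpleGraph α) (G₂ : SimpleGraph β) : ℕ :=
  sInf {n : ℕ | ∀ G : SimpleGraph (Fin n), ContainsCopy G₁ G ∨ ContainsCopy G₂ Gᶜ}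

lemma containsCopy_book_iff (n : ℕ) (G : SimpleGraph (Fin 16)) [DecidableRel G.Adj] :
    ContainsCopy (bookGraph n) G ↔
      ∃ u v, G.Adj u v ∧ n ≤ (G.neighborFinset u ∩ G.neighborFinset v).card := by
  constructor
  · rintro ⟨f, hinj, hadj⟩
    refine ⟨f (.inl 0), f (.inl 1), hadj (by simp [bookGraph, graphJoin]), ?_⟩
    have hmem : ∀ i : Fin n,
        f (.inr i) ∈ G.neighborFinset (f (.inl 0)) ∩ G.neighborFinset (f (.inl 1)) := by
      intro i
      simp only [Finset.mem_inter, SimpleGraph.mem_neighborFinset]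
      exact ⟨hadj (by simp [bookGraph, graphJoin]), hadj (by simp [bookGraph, graphJoin])⟩
    calc n = (Finset.univ : Finset (Fin n)).card := by simp
      _ ≤ _ := Finset.card_le_card_of_injOn (fun i => f (.inr i))
          (fun i _ => hmem i) (fun a _ b _ h => by
            have := hinj h; simpa using this)
  · rintro ⟨u, v, huv, hcard⟩
    obtain ⟨t, hts, htc⟩ := Finset.exists_subset_card_eq hcard
    let e := t.orderIsoOfFin htc
    refine ⟨Sum.elim ![u, v] (fun i => (e i : Fin 16)), ?_, ?_⟩
    · have hmem : ∀ i : Fin n, G.Adj u (e i) ∧ G.Adj v (e i) := by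
        intro i
        have := hts (e i).2
        simp only [Finset.mem_inter, SimpleGraph.mem_neighborFinset] at this
        exact this
      have hne : u ≠ v := G.ne_of_adj huv
      have hpage : ∀ (a : Fin 2) (b : Fin n), ![u, v] a ≠ (e b : Fin 16) := by
        intro a b
        fin_cases a
        · exact G.ne_of_adj (hmem b).1
        · exact G.ne_of_adj (hmem b).2
      rintro (a | a) (b | b) h
      · simp only [Sum.elim_inl] at h
        fin_cases a <;> fin_cases b <;> simp_all
      · exact absurd h (hpage a b)
      · exact absurd h.symm (hpage b a)
      · simp only [Sum.elim_inr] at h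
        exact congrArg Sum.inr (e.injective (Subtype.ext h))
    · have hmem : ∀ i : Fin n, G.Adj u (e i) ∧ G.Adj v (e i) := by
        intro i
        have := hts (e i).2
        simp only [Finset.mem_inter, SimpleGraph.mem_neighborFinset] at this
        exact this
      rintro (a | a) (b | b) h
      · have hab : a ≠ b := by
          simpa [bookGraph, graphJoin] using h
        fin_cases a <;> fin_cases b <;> first
          | exact absurd rfl hab | exact huv | exact huv.symm
      · fin_cases a
        · exact (hmem b).1
        · exact (hmem b).2
      · fin_cases b
        · exact ((hmem a).1).symm
        · exact ((hmem a).2).symm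
      · exact absurd h (by simp [bookGraph, graphJoin])

/-- The complement of the 4×4 rook's graph. -/
def rookC : SimpleGraph (Fin 16) where
  Adj u v := u.val / 4 ≠ v.val / 4 ∧ u.val % 4 ≠ v.val % 4
  symm := ⟨fun u v h => ⟨h.1.symm, h.2.symm⟩⟩
  loopless := ⟨fun u h => h.1 rfl⟩

instance : DecidableRel rookC.Adj := fun u v =>
  inferInstanceAs (Decidable (u.val / 4 ≠ v.val / 4 ∧ u.val % 4 ≠ v.val % 4))

/-- There is a simple graph on 16 vertices not containing the book `B₆` as a
subgraph, whose complement does not contain the book `B₃` as a subgraph. -/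
theorem exists_critical_graph_B3_B6 :
    ∃ G : SimpleGraph (Fin 16),
      ¬ ContainsCopy (bookGraph 6) G ∧ ¬ ContainsCopy (bookGraph 3) Gᶜ := by
  refine ⟨rookC, ?_, ?_⟩
  · rw [containsCopy_book_iff]
    decide
  · rw [containsCopy_book_iff]
    decide
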